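/- An explicit improper integral identity: Fix an integer Δ ≥ 3. For every r ∈ R_Δ, the improper integral ∫_0^∞ e^{−λ(s)} · λ(s) · λ'(s) · Λ_r(s) ds converges and equals (1/2) · Σ_{k=3}^Δ (k−2)·r_k. -/

import Mathlib

open Real MeasureTheory Filter

noncomputable section

/-- Tail sums: `s_k = Σ_{d=k}^Δ r_d` (also used as `q_k` for distributions `p`). -/
def tailS (Δ : ℕ) (r : ℕ → ℝ) (k : ℕ) : ℝ := ∑ d ∈ Finset.Icc k Δ, r d

/-- Membership in the set `R_Δ`: `r_2 = -1`, `r_k ≥ 0` for `3 ≤ k ≤ Δ`, `r_k = 0` for `k > Δ`,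
and `Σ_{k=3}^Δ r_k = 1`. -/
def memR (Δ : ℕ) (r : ℕ → ℝ) : Prop :=
  r 2 = -1 ∧ (∀ k, 3 ≤ k → k ≤ Δ → 0 ≤ r k) ∧ (∀ k, Δ < k → r k = 0) ∧
    (∑ k ∈ Finset.Icc 3 Δ, r k) = 1

/-- The Molloy–Reed constant `Υ_r = Σ_{k=3}^Δ k(k-2) r_k`. -/
def Upsilon (Δ : ℕ) (r : ℕ → ℝ) : ℝ := ∑ k ∈ Finset.Icc 3 Δ, (k : ℝ) * ((k : ℝ) - 2) * r k

/-- `Λ_r(t) = λ'(t) · ∫_0^{λ(t)} e^x/(1+x)² · (Σ_{k=2}^{Δ-1} x^k/k! · s_{k+1}) dx`. -/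
def LamErr (lam : ℝ → ℝ) (Δ : ℕ) (r : ℕ → ℝ) (t : ℝ) : ℝ :=
  deriv lam t * ∫ x in (0:ℝ)..(lam t),
    Real.exp x / (1 + x) ^ 2 *
      ∑ k ∈ Finset.Icc 2 (Δ - 1), x ^ k / (Nat.factorial k : ℝ) * tailS Δ r (k + 1)

/-- `H_r(t) = e^{-λ(t)} (Λ_r'(t) - λ'(t)Λ_r(t) + λ'(t) Σ_{k=0}^{Δ-2} λ(t)^k/k! · r_{k+2})`. -/
def Herr (lam : ℝ → ℝ) (Δ : ℕ) (r : ℕ → ℝ) (t : ℝ) : ℝ :=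
  Real.exp (-lam t) *
    (deriv (LamErr lam Δ r) t - deriv lam t * LamErr lam Δ r t +
      deriv lam t * ∑ k ∈ Finset.range (Δ - 1), lam t ^ k / (Nat.factorial k : ℝ) * r (k + 2))

/-- `I_r(t) = e^{-λ(t)} ( -Λ_r(t) + Σ_{k=1}^{Δ-2} λ(t)^k/k! · s_{k+2})`. -/
def Ierr (lam : ℝ → ℝ) (Δ : ℕ) (r : ℕ → ℝ) (t : ℝ) : ℝ :=
  Real.exp (-lam t) *
    (-LamErr lam Δ r t +
      ∑ k ∈ Finset.Icc 1 (Δ - 2), lam t ^ k / (Nat.factorial k : ℝ) * tailS Δ r (k + 2))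

/-- `u(t) = 1 + λ(t) ∫_0^t (λ'(s)-1)/λ(s)² ds`. -/
def uAux (lam : ℝ → ℝ) (t : ℝ) : ℝ :=
  1 + lam t * ∫ s in (0:ℝ)..t, (deriv lam s - 1) / (lam s) ^ 2

/-- `α_r(t) = -∫_0^t u(s) H_r(s) λ(s) ds`. -/
def alphaAux (lam : ℝ → ℝ) (Δ : ℕ) (r : ℕ → ℝ) (t : ℝ) : ℝ :=
  -∫ s in (0:ℝ)..t, uAux lam s * Herr lam Δ r s * lam s

/-- `β_r(t) = ∫_0^t H_r(s) λ(s)² ds`. -/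
def betaAux (lam : ℝ → ℝ) (Δ : ℕ) (r : ℕ → ℝ) (t : ℝ) : ℝ :=
  ∫ s in (0:ℝ)..t, Herr lam Δ r s * (lam s) ^ 2

/-- `ω_r(t) = α_r(t) λ(t) + β_r(t) u(t)`. -/
def omegaAux (lam : ℝ → ℝ) (Δ : ℕ) (r : ℕ → ℝ) (t : ℝ) : ℝ :=
  alphaAux lam Δ r t * lam t + betaAux lam Δ r t * uAux lam t

/-- `t^-_{p,δ} = (1-δ)/(ε Υ_r)`. -/
def tMinus (Δ : ℕ) (r : ℕ → ℝ) (ε δ : ℝ) : ℝ := (1 - δ) / (ε * Upsilon Δ r)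

/-- `t^+_{p,δ} = (1+δ)/(ε Υ_r)`. -/
def tPlus (Δ : ℕ) (r : ℕ → ℝ) (ε δ : ℝ) : ℝ := (1 + δ) / (ε * Upsilon Δ r)

/-- `w^-_{p,δ}`. -/
def wMinus (lam : ℝ → ℝ) (Δ : ℕ) (r : ℕ → ℝ) (ε δ : ℝ) (t : ℝ) : ℝ :=
  if t ≤ tMinus Δ r ε δ then lam t + (1 + δ / 2) * ε * omegaAux lam Δ r t
  else lam (tMinus Δ r ε δ) + (1 + δ / 2) * ε * omegaAux lam Δ r (tMinus Δ r ε δ)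

/-- `w^+_{p,δ}`. -/
def wPlus (lam : ℝ → ℝ) (Δ : ℕ) (r : ℕ → ℝ) (ε δ : ℝ) (t : ℝ) : ℝ :=
  if t ≤ tPlus Δ r ε δ then lam t + (1 - δ / 2) * ε * omegaAux lam Δ r t
  else lam (tPlus Δ r ε δ) + (1 - δ / 2) * ε * omegaAux lam Δ r (tPlus Δ r ε δ)

/-- `Ī^-_{p,δ}(t) = e^{-λ(t)} + (1-δ) ε I_r(t)`. -/
def IbarMinus (lam : ℝ → ℝ) (Δ : ℕ) (r : ℕ → ℝ) (ε δ : ℝ) (t : ℝ) : ℝ :=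
  Real.exp (-lam t) + (1 - δ) * ε * Ierr lam Δ r t

/-- `Ī^+_{p,δ}(t) = e^{-λ(t)} + (1+δ) ε I_r(t)`. -/
def IbarPlus (lam : ℝ → ℝ) (Δ : ℕ) (r : ℕ → ℝ) (ε δ : ℝ) (t : ℝ) : ℝ :=
  Real.exp (-lam t) + (1 + δ) * ε * Ierr lam Δ r t

/-- `Ĩ_p(x) = e^{-x} (1 + ε Σ_{k=1}^{Δ-2} x^k/k! · s_{k+2})`. -/
def Itilde (Δ : ℕ) (r : ℕ → ℝ) (ε : ℝ) (x : ℝ) : ℝ :=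
  Real.exp (-x) *
    (1 + ε * ∑ k ∈ Finset.Icc 1 (Δ - 2), x ^ k / (Nat.factorial k : ℝ) * tailS Δ r (k + 2))


/-!
Since `λ' = e^{-λ} (1 + λ)`, `λ` is nonnegative and increases to `∞` (indeed `e^{λ(t)} ≥ 1 + t`),
and the substitution `y = λ(s)` turns the integrand into `y (1 + y) e^{-2y} F(y) dy`, where
`F(y) = ∫_0^y e^x (1 + x)^{-2} g(x) dx` and `g(x) = Σ_{k=2}^{Δ-1} x^k/k! · s_{k+1}`.
Integrating by parts against `d/dy [-(1 + y)² e^{-2y} / 2]` removes the factor `(1 + x)^{-2}` and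
leaves `(1/2) ∫_0^∞ e^{-y} g(y) dy = (1/2) Σ_{k=2}^{Δ-1} s_{k+1}`, a sum of Erlang integrals;
finally `Σ_{k=3}^Δ s_k = Σ_{k=3}^Δ (k - 2) r_k`. The resulting primitive is explicit, and as the
integrand is nonnegative, its integrability and its integral both follow from the limit of that
primitive at `∞`.
-/

open Set Topology

section SolutionOfODE

variable {lam : ℝ → ℝ}

theorem lam_nonneg (hdiff : Differentiable ℝ lam) (h0 : lam 0 = 0)
    (hode : ∀ t : ℝ, 0 ≤ t → deriv lam t = exp (-lam t) * (1 + lam t)) {t : ℝ} (ht : 0 ≤ t) :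
    0 ≤ lam t := by
  -- at a zero of `lam` the slope is `exp 0 * (1 + 0) = 1 > 0`, so `lam` cannot cross `0` downwards
  have key := image_le_of_deriv_right_lt_deriv_boundary' (a := 0) (b := t)
    (f := fun s => -lam s) (f' := fun s => -deriv lam s) (B := fun _ => 0) (B' := fun _ => 0)
    hdiff.continuous.neg.continuousOn (fun x _ => (hdiff x).hasDerivAt.neg.hasDerivWithinAt)
    (by simp [h0]) continuousOn_const (fun x _ => hasDerivWithinAt_const _ _ _)
    (fun x hx hx0 => by
      rw [hode x hx.1, show lam x = 0 by linarith]
      norm_num)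
    ⟨ht, le_rfl⟩
  linarith

theorem one_add_le_exp_lam (hdiff : Differentiable ℝ lam) (h0 : lam 0 = 0)
    (hode : ∀ t : ℝ, 0 ≤ t → deriv lam t = exp (-lam t) * (1 + lam t)) {t : ℝ} (ht : 0 ≤ t) :
    1 + t ≤ exp (lam t) := by
  -- `(exp ∘ lam)' = 1 + lam ≥ 1`
  refine image_le_of_deriv_right_le_deriv_boundary (a := 0) (b := t) (f' := fun _ => 1)
    (B := fun s => exp (lam s)) (B' := fun s => exp (lam s) * deriv lam s)
    (by fun_prop) (fun x _ => ((hasDerivAt_id x).const_add 1).hasDerivWithinAt)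
    (by simp [h0]) (hdiff.continuous.rexp.continuousOn)
    (fun x _ => (hdiff x).hasDerivAt.exp.hasDerivWithinAt) (fun x hx => ?_) ⟨ht, le_rfl⟩
  rw [hode x hx.1, ← mul_assoc, ← exp_add, add_neg_cancel, exp_zero, one_mul]
  linarith [lam_nonneg hdiff h0 hode hx.1]

theorem tendsto_lam_atTop (hdiff : Differentiable ℝ lam) (h0 : lam 0 = 0)
    (hode : ∀ t : ℝ, 0 ≤ t → deriv lam t = exp (-lam t) * (1 + lam t)) :
    Tendsto lam atTop atTop := by
  refine tendsto_atTop_mono' _ ?_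
    (tendsto_log_atTop.comp (tendsto_atTop_add_const_left atTop 1 tendsto_id))
  filter_upwards [eventually_ge_atTop 0] with t ht
  exact (log_le_iff_le_exp (by positivity)).2 (one_add_le_exp_lam hdiff h0 hode ht)

end SolutionOfODE

/-- The CDF `∫_0^y e^{-x} x^k / k! dx` of the Erlang distribution of shape `k + 1`. -/
def erlangCDF (k : ℕ) (y : ℝ) : ℝ :=
  1 - exp (-y) * ∑ j ∈ Finset.range (k + 1), y ^ j / (Nat.factorial j : ℝ)

theorem erlangCDF_zero (k : ℕ) : erlangCDF k 0 = 0 := by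
  simp [erlangCDF, Finset.sum_range_succ']

theorem hasDerivAt_erlangCDF (k : ℕ) (y : ℝ) :
    HasDerivAt (erlangCDF k) (exp (-y) * y ^ k / (Nat.factorial k : ℝ)) y := by
  induction k with
  | zero =>
    have h0 : erlangCDF 0 = fun y => 1 - exp (-y) := by
      funext y
      simp [erlangCDF]
    rw [h0]
    exact (((hasDerivAt_neg y).exp).const_sub 1).congr_deriv (by simp)
  | succ k ih =>
    have hstep : erlangCDF (k + 1) =
        fun y => erlangCDF k y - exp (-y) * (y ^ (k + 1) / (Nat.factorial (k + 1) : ℝ)) := by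
      funext y
      rw [erlangCDF, erlangCDF, Finset.sum_range_succ _ (k + 1)]
      ring
    rw [hstep]
    refine (ih.sub (((hasDerivAt_neg y).exp).mul
      ((hasDerivAt_pow (k + 1) y).div_const _))).congr_deriv ?_
    rw [Nat.factorial_succ]
    push_cast
    field_simp
    ring

theorem tendsto_erlangCDF_atTop (k : ℕ) : Tendsto (erlangCDF k) atTop (𝓝 1) := by
  have h : Tendsto (fun y => ∑ j ∈ Finset.range (k + 1), y ^ j * exp (-y) / (Nat.factorial j : ℝ))
      atTop (𝓝 0) := by
    simpa using tendsto_finsetSum _ fun j _ =>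
      (tendsto_pow_mul_exp_neg_atTop_nhds_zero j).div_const (Nat.factorial j : ℝ)
  convert h.const_sub 1 using 2 with y
  · rw [erlangCDF, Finset.mul_sum]
    congr 1
    exact Finset.sum_congr rfl fun j _ => by ring
  · simp

theorem tendsto_one_add_pow_mul_exp_neg_atTop (n : ℕ) :
    Tendsto (fun y : ℝ => (1 + y) ^ n * exp (-y)) atTop (𝓝 0) := by
  have h := ((tendsto_pow_mul_exp_neg_atTop_nhds_zero n).comp
    (tendsto_atTop_add_const_left atTop 1 tendsto_id)).const_mul (exp 1)
  rw [mul_zero] at h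
  refine h.congr fun y => ?_
  simp only [Function.comp_apply, id]
  rw [neg_add, exp_add, exp_neg 1]
  field_simp

theorem tailS_nonneg {Δ : ℕ} {r : ℕ → ℝ} (hr : ∀ k, 3 ≤ k → k ≤ Δ → 0 ≤ r k) {k : ℕ}
    (hk : 3 ≤ k) : 0 ≤ tailS Δ r k :=
  Finset.sum_nonneg fun d hd => hr d (hk.trans (Finset.mem_Icc.1 hd).1) (Finset.mem_Icc.1 hd).2

theorem sum_tailS_succ_eq (Δ : ℕ) (r : ℕ → ℝ) :
    ∑ k ∈ Finset.Icc 2 (Δ - 1), tailS Δ r (k + 1) = ∑ k ∈ Finset.Icc 3 Δ, ((k : ℝ) - 2) * r k := by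
  unfold tailS
  rw [Finset.sum_comm' (t' := Finset.Icc 3 Δ) (s' := fun d => Finset.Icc 2 (d - 1))
    (fun k d => by simp only [Finset.mem_Icc]; omega)]
  refine Finset.sum_congr rfl fun d hd => ?_
  have hd3 : 3 ≤ d := (Finset.mem_Icc.1 hd).1
  rw [Finset.sum_const, Nat.card_Icc, nsmul_eq_mul, Nat.cast_sub (by omega)]
  push_cast [Nat.cast_sub (by omega : 1 ≤ d)]
  ring

section InnerIntegral

variable (Δ : ℕ) (r : ℕ → ℝ)

def tailPoly (x : ℝ) : ℝ :=
  ∑ k ∈ Finset.Icc 2 (Δ - 1), x ^ k / (Nat.factorial k : ℝ) * tailS Δ r (k + 1)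

def innerIntegrand (x : ℝ) : ℝ := exp x / (1 + x) ^ 2 * tailPoly Δ r x

def innerIntegral (y : ℝ) : ℝ := ∫ x in (0 : ℝ)..y, innerIntegrand Δ r x

theorem lamErr_eq (lam : ℝ → ℝ) (t : ℝ) :
    LamErr lam Δ r t = deriv lam t * innerIntegral Δ r (lam t) := rfl

theorem continuousOn_innerIntegrand : ContinuousOn (innerIntegrand Δ r) (Ioi (-1)) := by
  unfold innerIntegrand tailPoly
  refine ContinuousOn.mul ?_ (by fun_prop)
  exact continuous_exp.continuousOn.div (by fun_prop) fun x hx =>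
    pow_ne_zero 2 (by linarith [mem_Ioi.1 hx])

theorem hasDerivAt_innerIntegral {y : ℝ} (hy : -1 < y) :
    HasDerivAt (innerIntegral Δ r) (innerIntegrand Δ r y) y := by
  have hcont := continuousOn_innerIntegrand Δ r
  refine intervalIntegral.integral_hasDerivAt_right ?_
    (hcont.stronglyMeasurableAtFilter isOpen_Ioi y hy) (hcont.continuousAt (Ioi_mem_nhds hy))
  refine (hcont.mono fun x hx => ?_).intervalIntegrable
  exact lt_of_lt_of_le (lt_min (by norm_num) hy) hx.1

variable {Δ r}

theorem tailPoly_nonneg (hr : ∀ k, 3 ≤ k → k ≤ Δ → 0 ≤ r k) {x : ℝ} (hx : 0 ≤ x) :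
    0 ≤ tailPoly Δ r x :=
  Finset.sum_nonneg fun k hk => by
    have := tailS_nonneg hr (k := k + 1) (by linarith [(Finset.mem_Icc.1 hk).1])
    positivity

theorem tailPoly_le (hr : ∀ k, 3 ≤ k → k ≤ Δ → 0 ≤ r k) {x : ℝ} (hx : 0 ≤ x) :
    tailPoly Δ r x ≤ (∑ k ∈ Finset.Icc 2 (Δ - 1), tailS Δ r (k + 1)) * (1 + x) ^ Δ := by
  rw [tailPoly, Finset.sum_mul]
  refine Finset.sum_le_sum fun k hk => ?_
  have hkΔ : k ≤ Δ := by have := (Finset.mem_Icc.1 hk).2; omega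
  have hs := tailS_nonneg hr (k := k + 1) (by linarith [(Finset.mem_Icc.1 hk).1])
  have hpow : x ^ k / (Nat.factorial k : ℝ) ≤ (1 + x) ^ Δ :=
    calc x ^ k / (Nat.factorial k : ℝ) ≤ x ^ k :=
          div_le_self (by positivity) (by exact_mod_cast k.factorial_pos)
      _ ≤ (1 + x) ^ k := by gcongr; linarith
      _ ≤ (1 + x) ^ Δ := pow_le_pow_right₀ (by linarith) hkΔ
  rw [mul_comm (tailS Δ r (k + 1))]
  exact mul_le_mul_of_nonneg_right hpow hs

theorem innerIntegral_nonneg (hr : ∀ k, 3 ≤ k → k ≤ Δ → 0 ≤ r k) {y : ℝ} (hy : 0 ≤ y) :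
    0 ≤ innerIntegral Δ r y :=
  intervalIntegral.integral_nonneg hy fun x hx => by
    have := tailPoly_nonneg hr hx.1
    unfold innerIntegrand
    positivity

theorem innerIntegral_le (hr : ∀ k, 3 ≤ k → k ≤ Δ → 0 ≤ r k) {y : ℝ} (hy : 0 ≤ y) :
    innerIntegral Δ r y ≤
      (∑ k ∈ Finset.Icc 2 (Δ - 1), tailS Δ r (k + 1)) * (1 + y) ^ (Δ + 1) * exp y := by
  set C := ∑ k ∈ Finset.Icc 2 (Δ - 1), tailS Δ r (k + 1)
  have hC : 0 ≤ C := Finset.sum_nonneg fun k hk =>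
    tailS_nonneg hr (by linarith [(Finset.mem_Icc.1 hk).1])
  have hbound : ∀ x ∈ uIoc 0 y, ‖innerIntegrand Δ r x‖ ≤ C * (1 + y) ^ Δ * exp y := by
    intro x hx
    rw [uIoc_of_le hy] at hx
    have hg := tailPoly_nonneg hr hx.1.le
    have hfrac : exp x / (1 + x) ^ 2 ≤ exp y :=
      (div_le_self (exp_pos x).le (one_le_pow₀ (by linarith [hx.1]))).trans
        (exp_le_exp.2 hx.2)
    have hgy : tailPoly Δ r x ≤ C * (1 + y) ^ Δ :=
      (tailPoly_le hr hx.1.le).trans (by gcongr <;> linarith [hx.1, hx.2])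
    rw [Real.norm_of_nonneg (by unfold innerIntegrand; positivity), innerIntegrand]
    exact (mul_le_mul hfrac hgy hg (exp_pos y).le).trans_eq (mul_comm _ _)
  have h := intervalIntegral.norm_integral_le_of_norm_le_const hbound
  rw [sub_zero, abs_of_nonneg hy] at h
  calc innerIntegral Δ r y ≤ C * (1 + y) ^ Δ * exp y * y := (le_abs_self _).trans h
    _ ≤ C * (1 + y) ^ Δ * exp y * (1 + y) := by gcongr; linarith
    _ = C * (1 + y) ^ (Δ + 1) * exp y := by ring

end InnerIntegral

section OuterPrimitive

variable (Δ : ℕ) (r : ℕ → ℝ)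

def outerPrimitive (y : ℝ) : ℝ :=
  -(1 / 2) * exp (-2 * y) * (1 + y) ^ 2 * innerIntegral Δ r y +
    (1 / 2) * ∑ k ∈ Finset.Icc 2 (Δ - 1), tailS Δ r (k + 1) * erlangCDF k y

theorem outerPrimitive_zero : outerPrimitive Δ r 0 = 0 := by
  simp [outerPrimitive, innerIntegral, erlangCDF_zero]

theorem hasDerivAt_outerPrimitive {y : ℝ} (hy : -1 < y) :
    HasDerivAt (outerPrimitive Δ r) (exp (-2 * y) * y * (1 + y) * innerIntegral Δ r y) y := by
  have hexp : HasDerivAt (fun y : ℝ => exp (-2 * y)) (exp (-2 * y) * -2) y := by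
    simpa using ((hasDerivAt_id y).const_mul (-2 : ℝ)).exp
  have hsq : HasDerivAt (fun y : ℝ => (1 + y) ^ 2) (2 * (1 + y)) y := by
    simpa using ((hasDerivAt_id y).const_add 1).fun_pow 2
  have hsum := HasDerivAt.fun_sum (u := Finset.Icc 2 (Δ - 1)) fun k _ =>
    (hasDerivAt_erlangCDF k y).const_mul (tailS Δ r (k + 1))
  have h := (((hexp.fun_mul hsq).fun_mul (hasDerivAt_innerIntegral Δ r hy)).const_mul
    (-(1 / 2) : ℝ)).fun_add (hsum.const_mul (1 / 2 : ℝ))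
  refine (h.congr_deriv ?_).congr_of_eventuallyEq (Eventually.of_forall fun z => by
    simp only [outerPrimitive]; ring)
  have hcancel : exp (-2 * y) * (1 + y) ^ 2 * innerIntegrand Δ r y =
      ∑ k ∈ Finset.Icc 2 (Δ - 1),
        tailS Δ r (k + 1) * (exp (-y) * y ^ k / (Nat.factorial k : ℝ)) := by
    have h1y : 1 + y ≠ 0 := by linarith
    have hexp2 : exp (-2 * y) * exp y = exp (-y) := by rw [← exp_add]; ring_nf
    rw [innerIntegrand, tailPoly, Finset.mul_sum, Finset.mul_sum]
    refine Finset.sum_congr rfl fun k _ => ?_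
    rw [← hexp2]
    field_simp
  linear_combination (-(1 / 2) : ℝ) * hcancel

variable {Δ r}

theorem tendsto_outerPrimitive_atTop (hr : ∀ k, 3 ≤ k → k ≤ Δ → 0 ≤ r k) :
    Tendsto (outerPrimitive Δ r) atTop
      (𝓝 ((1 / 2) * ∑ k ∈ Finset.Icc 2 (Δ - 1), tailS Δ r (k + 1))) := by
  set C := ∑ k ∈ Finset.Icc 2 (Δ - 1), tailS Δ r (k + 1)
  have hboundary : Tendsto (fun y => exp (-2 * y) * (1 + y) ^ 2 * innerIntegral Δ r y)
      atTop (𝓝 0) := by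
    have hmajor := (tendsto_one_add_pow_mul_exp_neg_atTop (Δ + 3)).const_mul C
    rw [mul_zero] at hmajor
    refine tendsto_of_tendsto_of_tendsto_of_le_of_le' tendsto_const_nhds hmajor ?_ ?_
    · filter_upwards [eventually_ge_atTop 0] with y hy
      have := innerIntegral_nonneg hr hy
      positivity
    · filter_upwards [eventually_ge_atTop 0] with y hy
      calc exp (-2 * y) * (1 + y) ^ 2 * innerIntegral Δ r y
          ≤ exp (-2 * y) * (1 + y) ^ 2 * (C * (1 + y) ^ (Δ + 1) * exp y) := by
            gcongr; exact innerIntegral_le hr hy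
        _ = C * ((1 + y) ^ (Δ + 3) * (exp (-2 * y) * exp y)) := by ring
        _ = C * ((1 + y) ^ (Δ + 3) * exp (-y)) := by rw [← exp_add]; ring_nf
  have herlang : Tendsto (fun y => ∑ k ∈ Finset.Icc 2 (Δ - 1), tailS Δ r (k + 1) * erlangCDF k y)
      atTop (𝓝 C) := by
    simpa using tendsto_finsetSum _ fun k _ =>
      (tendsto_erlangCDF_atTop k).const_mul (tailS Δ r (k + 1))
  have h := (hboundary.const_mul (-(1 / 2) : ℝ)).add (herlang.const_mul (1 / 2 : ℝ))
  rw [mul_zero, zero_add] at h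
  exact h.congr fun y => by simp only [outerPrimitive]; ring

end OuterPrimitive

theorem hasDerivAt_outerPrimitive_comp_lam (Δ : ℕ) (r : ℕ → ℝ) {lam : ℝ → ℝ}
    (hdiff : Differentiable ℝ lam) (h0 : lam 0 = 0)
    (hode : ∀ t : ℝ, 0 ≤ t → deriv lam t = exp (-lam t) * (1 + lam t)) {t : ℝ} (ht : 0 ≤ t) :
    HasDerivAt (fun s => outerPrimitive Δ r (lam s))
      (exp (-lam t) * lam t * deriv lam t * LamErr lam Δ r t) t := by
  have hlam := lam_nonneg hdiff h0 hode ht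
  refine ((hasDerivAt_outerPrimitive Δ r (by linarith)).comp t (hdiff t).hasDerivAt).congr_deriv ?_
  have hexp2 : exp (-2 * lam t) = exp (-lam t) * exp (-lam t) := by rw [← exp_add]; ring_nf
  rw [lamErr_eq, hode t ht, hexp2]
  ring

theorem improper_integral_identity_general (Δ : ℕ) (lam : ℝ → ℝ)
    (hdiff : Differentiable ℝ lam) (h0 : lam 0 = 0)
    (hode : ∀ t : ℝ, 0 ≤ t → deriv lam t = Real.exp (-lam t) * (1 + lam t))
    (r : ℕ → ℝ) (hr : memR Δ r) :
    MeasureTheory.IntegrableOn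
      (fun s => Real.exp (-lam s) * lam s * deriv lam s * LamErr lam Δ r s) (Set.Ici 0) ∧
    (∫ s in Set.Ici (0:ℝ), Real.exp (-lam s) * lam s * deriv lam s * LamErr lam Δ r s) =
      (1 / 2) * ∑ k ∈ Finset.Icc 3 Δ, ((k : ℝ) - 2) * r k := by
  have hderiv : ∀ t ∈ Ici (0 : ℝ), HasDerivAt (fun s => outerPrimitive Δ r (lam s))
      (exp (-lam t) * lam t * deriv lam t * LamErr lam Δ r t) t :=
    fun t ht => hasDerivAt_outerPrimitive_comp_lam Δ r hdiff h0 hode ht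
  have hnonneg : ∀ t ∈ Ioi (0 : ℝ),
      0 ≤ exp (-lam t) * lam t * deriv lam t * LamErr lam Δ r t := by
    intro t ht
    have hlam := lam_nonneg hdiff h0 hode (le_of_lt ht)
    have hF := innerIntegral_nonneg hr.2.1 hlam
    have hsq : exp (-lam t) * lam t * deriv lam t * LamErr lam Δ r t =
        exp (-lam t) * lam t * deriv lam t ^ 2 * innerIntegral Δ r (lam t) := by
      rw [lamErr_eq]
      ring
    rw [hsq]
    positivity
  have hlim := (tendsto_outerPrimitive_atTop hr.2.1).comp (tendsto_lam_atTop hdiff h0 hode)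
  refine ⟨(integrableOn_Ici_iff_integrableOn_Ioi).2
    (integrableOn_Ioi_deriv_of_nonneg' hderiv hnonneg hlim), ?_⟩
  rw [integral_Ici_eq_integral_Ioi, integral_Ioi_of_hasDerivAt_of_nonneg' hderiv hnonneg hlim,
    h0, outerPrimitive_zero, sub_zero, sum_tailS_succ_eq]

/-- Explicit improper integral identity:
`∫_0^∞ e^{-λ(s)} λ(s) λ'(s) Λ_r(s) ds = (1/2) Σ_{k=3}^Δ (k-2) r_k`. -/
theorem improper_integral_identity (Δ : ℕ) (hΔ : 3 ≤ Δ) (lam : ℝ → ℝ)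
    (hdiff : Differentiable ℝ lam) (h0 : lam 0 = 0)
    (hode : ∀ t : ℝ, 0 ≤ t → deriv lam t = Real.exp (-lam t) * (1 + lam t))
    (r : ℕ → ℝ) (hr : memR Δ r) :
    MeasureTheory.IntegrableOn
      (fun s => Real.exp (-lam s) * lam s * deriv lam s * LamErr lam Δ r s) (Set.Ici 0) ∧
    (∫ s in Set.Ici (0:ℝ), Real.exp (-lam s) * lam s * deriv lam s * LamErr lam Δ r s) =
      (1 / 2) * ∑ k ∈ Finset.Icc 3 Δ, ((k : ℝ) - 2) * r k :=
  improper_integral_identity_general Δ lam hdiff h0 hode r hr
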